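/- Suppose H = H_1 ⊗ H_2 is a tensor product of finite-dimensional complex Hilbert spaces, and the bases are of product form: a_{(m,n)} = a¹_m ⊗ a²_n and a'_{(m,n)} = a'¹_m ⊗ a'²_n, where {a¹_m}, {a'¹_m} are orthonormal bases of H_1 and {a²_n}, {a'²_n} are orthonormal bases of H_2. Then ε(𝒜,𝒜') ≥ ε(𝒜¹,𝒜'¹), where ε(𝒜¹,𝒜'¹) is the state-independent error of the measurements on H_1 given by {a¹_m} and {a'¹_m}. -/

import Mathlib

open scoped ComplexInnerProductSpace

noncomputable section

variable {H : Type*} [NormedAddCommGroup H] [InnerProductSpace ℂ H] [FiniteDimensional ℂ H]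
variable {ι ι' : Type*} [Fintype ι] [Fintype ι']

/-- The rank-one projector `|v⟩⟨v|`. -/
def ketbra (v : H) : H →ₗ[ℂ] H where
  toFun x := ⟪v, x⟫ • v
  map_add' x y := by simp [inner_add_right, add_smul]
  map_smul' c x := by simp [inner_smul_right, mul_smul]

/-- A density operator: self-adjoint, positive semidefinite, trace one. -/
def IsDensity (ρ : H →ₗ[ℂ] H) : Prop :=
  LinearMap.IsSymmetric ρ ∧ (∀ x : H, 0 ≤ (⟪x, ρ x⟫).re) ∧
    LinearMap.trace ℂ H ρ = 1

/-- The state-dependent error `ε_ρ(𝒜,𝒜')`. -/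
def sdError (a a' : ι → H) (ρ : H →ₗ[ℂ] H) : ℝ :=
  ⨆ i : ι, ‖LinearMap.trace ℂ H (ρ ∘ₗ (ketbra (a i) - ketbra (a' i)))‖

/-- The state-independent error `ε(𝒜,𝒜')`. -/
def siError (a a' : ι → H) : ℝ :=
  ⨆ ρ : {ρ : H →ₗ[ℂ] H // IsDensity ρ}, sdError a a' ρ.1

/-- The operator `|b_i⟩⟨b_i| − Σ_j |⟨a'_j, b_i⟩|² |a'_j⟩⟨a'_j|`. -/
def distOp (a' : ι' → H) (b : ι → H) (i : ι) : H →ₗ[ℂ] H :=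
  ketbra (b i) - ∑ j : ι', (‖⟪a' j, b i⟫‖ ^ 2 : ℂ) • ketbra (a' j)

/-- The state-dependent disturbance `η_ρ(𝒜',ℬ)`. -/
def sdDist (a' : ι' → H) (b : ι → H) (ρ : H →ₗ[ℂ] H) : ℝ :=
  ⨆ i : ι, ‖LinearMap.trace ℂ H (ρ ∘ₗ distOp a' b i)‖

/-- The state-independent disturbance `η(𝒜',ℬ)`. -/
def siDist (a' : ι' → H) (b : ι → H) : ℝ :=
  ⨆ ρ : {ρ : H →ₗ[ℂ] H // IsDensity ρ}, sdDist a' b ρ.1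

/-- The state-independent overall error `Δ(𝒜,𝒜',ℬ)`. -/
def siOverall (a a' b : ι → H) : ℝ :=
  ⨆ ρ : {ρ : H →ₗ[ℂ] H // IsDensity ρ}, (sdError a a' ρ.1 + sdDist a' b ρ.1)

/-!
Fix a state ρ₁ on H₁ and an outcome m, and let p, p' be the probabilities that ρ₁ gives to
a¹_m and a'¹_m. For a unit vector y ∈ H₂ the map x ↦ T x y = x ⊗ y is an isometry, so it carries ρ₁
to a state on H. Taking y = a²_n, the product measurements see the probabilities p and t p'
at the outcome (m, n), and taking y = a'²_n they see t p and p', where t = |⟨a²_n, a'²_n⟩|² ≤ 1.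
Since p, p' ≥ 0, one of the two differences is at least |p − p'|.
-/

section

variable {E : Type*} [NormedAddCommGroup E] [InnerProductSpace ℂ E] {κ : Type*}

theorem trace_comp_ketbra [FiniteDimensional ℂ E] (ρ : E →ₗ[ℂ] E) (v : E) :
    LinearMap.trace ℂ E (ρ ∘ₗ ketbra v) = ⟪v, ρ v⟫ := by
  have h : ρ ∘ₗ ketbra v = (InnerProductSpace.rankOne ℂ (ρ v) v : E →L[ℂ] E) := by
    ext x
    simp [ketbra]
  rw [h, InnerProductSpace.trace_rankOne]

theorem sdError_eq_iSup_norm_sub [FiniteDimensional ℂ E] (a a' : κ → E) (ρ : E →ₗ[ℂ] E) :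
    sdError a a' ρ = ⨆ i, ‖⟪a i, ρ (a i)⟫ - ⟪a' i, ρ (a' i)⟫‖ := by
  simp only [sdError, LinearMap.comp_sub, map_sub, trace_comp_ketbra]

theorem siError_nonneg (a a' : κ → E) : 0 ≤ siError a a' :=
  Real.iSup_nonneg fun _ => Real.iSup_nonneg fun _ => norm_nonneg _

theorem isDensity_iff {ρ : E →ₗ[ℂ] E} :
    IsDensity ρ ↔ ρ.IsPositive ∧ LinearMap.trace ℂ E ρ = 1 := by
  refine ⟨fun ⟨hsymm, hpos, htr⟩ => ⟨⟨hsymm, fun x => ?_⟩, htr⟩,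
    fun ⟨hpos, htr⟩ => ⟨hpos.isSymmetric, hpos.re_inner_nonneg_right, htr⟩⟩
  rw [hsymm]
  exact hpos x

namespace IsDensity

variable {ρ : E →ₗ[ℂ] E}

theorem coe_re_inner_apply_self (hρ : IsDensity ρ) (x : E) :
    ((⟪x, ρ x⟫).re : ℂ) = ⟪x, ρ x⟫ := by
  rw [← hρ.1]
  exact hρ.1.coe_re_inner_apply_self x

theorem re_inner_apply_self_le_one [FiniteDimensional ℂ E] (hρ : IsDensity ρ) {x : E}
    (hx : ‖x‖ = 1) : (⟪x, ρ x⟫).re ≤ 1 := by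
  classical
  have hon : Orthonormal ℂ ((↑) : ({x} : Set E) → E) :=
    orthonormal_subsingleton_iff.2 fun y => by rw [y.2]; exact hx
  obtain ⟨u, b, hxu, hb⟩ := hon.exists_orthonormalBasis_extension
  have htr := congrArg Complex.re (ρ.trace_eq_sum_inner b)
  rw [hρ.2.2, hb, Complex.re_sum, Finset.sum_coe_sort u fun y => (⟪y, ρ y⟫).re] at htr
  rw [← Complex.one_re, htr]
  exact Finset.single_le_sum (fun y _ => hρ.2.1 y) (hxu rfl)

theorem norm_inner_apply_self_le_one [FiniteDimensional ℂ E] (hρ : IsDensity ρ) {x : E}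
    (hx : ‖x‖ = 1) : ‖⟪x, ρ x⟫‖ ≤ 1 := by
  rw [← hρ.coe_re_inner_apply_self, Complex.norm_real, Real.norm_of_nonneg (hρ.2.1 x)]
  exact hρ.re_inner_apply_self_le_one hx

theorem conj_isometry {F : Type*} [NormedAddCommGroup F] [InnerProductSpace ℂ F]
    [FiniteDimensional ℂ E] [FiniteDimensional ℂ F] {ρ : F →ₗ[ℂ] F} (hρ : IsDensity ρ)
    {V : F →ₗ[ℂ] E} (hV : ∀ x y, ⟪V x, V y⟫ = ⟪x, y⟫) :
    IsDensity (V ∘ₗ ρ ∘ₗ V.adjoint) := by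
  have hVV : V.adjoint ∘ₗ V = LinearMap.id := LinearMap.ext fun x => ext_inner_left ℂ fun z => by
    rw [LinearMap.comp_apply, LinearMap.adjoint_inner_right, hV, LinearMap.id_apply]
  rw [isDensity_iff] at hρ ⊢
  refine ⟨hρ.1.conj_adjoint V, ?_⟩
  rw [LinearMap.trace_comp_comm', LinearMap.comp_assoc, hVV, LinearMap.comp_id, hρ.2]

end IsDensity

theorem norm_sub_inner_le_siError [FiniteDimensional ℂ E] {a a' : κ → E}
    (ha : ∀ i, ‖a i‖ = 1) (ha' : ∀ i, ‖a' i‖ = 1) {ρ : E →ₗ[ℂ] E} (hρ : IsDensity ρ) (i : κ) :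
    ‖⟪a i, ρ (a i)⟫ - ⟪a' i, ρ (a' i)⟫‖ ≤ siError a a' := by
  -- Without a uniform bound both suprema would be junk values.
  have hle_two : ∀ σ : E →ₗ[ℂ] E, IsDensity σ → ∀ j, ‖⟪a j, σ (a j)⟫ - ⟪a' j, σ (a' j)⟫‖ ≤ 2 :=
    fun σ hσ j => (norm_sub_le _ _).trans <| one_add_one_eq_two.le.trans' <|
      add_le_add (hσ.norm_inner_apply_self_le_one (ha j)) (hσ.norm_inner_apply_self_le_one (ha' j))
  have hsd : ‖⟪a i, ρ (a i)⟫ - ⟪a' i, ρ (a' i)⟫‖ ≤ sdError a a' ρ := by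
    rw [sdError_eq_iSup_norm_sub]
    exact le_ciSup ⟨2, Set.forall_mem_range.2 (hle_two ρ hρ)⟩ i
  refine hsd.trans (le_ciSup (f := fun σ : {σ // IsDensity σ} => sdError a a' σ.1) ⟨2, ?_⟩ ⟨ρ, hρ⟩)
  refine Set.forall_mem_range.2 fun σ => ?_
  rw [sdError_eq_iSup_norm_sub]
  exact Real.iSup_le (hle_two σ σ.2) zero_le_two

theorem abs_sub_le_abs_sub_mul_or {p p' t : ℝ} (hp : 0 ≤ p) (hp' : 0 ≤ p') (ht : t ≤ 1) :
    |p - p'| ≤ |p - t * p'| ∨ |p - p'| ≤ |t * p - p'| := by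
  rcases le_total p' p with h | h
  · left
    rw [abs_of_nonneg (sub_nonneg.2 h), abs_of_nonneg (by nlinarith)]
    nlinarith
  · right
    rw [abs_of_nonpos (sub_nonpos.2 h), abs_of_nonpos (by nlinarith)]
    nlinarith

variable {E₁ E₂ : Type*} [NormedAddCommGroup E₁] [InnerProductSpace ℂ E₁]
  [NormedAddCommGroup E₂] [InnerProductSpace ℂ E₂] {T : E₁ →ₗ[ℂ] E₂ →ₗ[ℂ] E}

theorem norm_apply_apply_of_inner
    (hT : ∀ (x u : E₁) (y v : E₂), ⟪T x y, T u v⟫ = ⟪x, u⟫ * ⟪y, v⟫) (x : E₁) (y : E₂) :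
    ‖T x y‖ = ‖x‖ * ‖y‖ := by
  have h := hT x x y y
  simp only [inner_self_eq_norm_sq_to_K] at h
  rw [← mul_pow] at h
  exact (pow_left_inj₀ (norm_nonneg _) (by positivity) two_ne_zero).1 (by exact_mod_cast h)

variable [FiniteDimensional ℂ E] [FiniteDimensional ℂ E₁]

theorem adjoint_flip_apply_of_inner
    (hT : ∀ (x u : E₁) (y v : E₂), ⟪T x y, T u v⟫ = ⟪x, u⟫ * ⟪y, v⟫) (x : E₁) (y y' : E₂) :
    (T.flip y).adjoint (T x y') = ⟪y, y'⟫ • x :=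
  ext_inner_left ℂ fun z => by
    rw [LinearMap.adjoint_inner_right, LinearMap.flip_apply, hT, inner_smul_right, mul_comm]

theorem inner_conj_flip_apply_of_inner
    (hT : ∀ (x u : E₁) (y v : E₂), ⟪T x y, T u v⟫ = ⟪x, u⟫ * ⟪y, v⟫) (ρ : E₁ →ₗ[ℂ] E₁)
    (x : E₁) (y y' : E₂) :
    ⟪T x y', (T.flip y ∘ₗ ρ ∘ₗ (T.flip y).adjoint) (T x y')⟫ =
      ((‖⟪y, y'⟫‖ ^ 2 : ℝ) : ℂ) * ⟪x, ρ x⟫ := by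
  rw [LinearMap.comp_apply, ← LinearMap.adjoint_inner_left, LinearMap.comp_apply,
    adjoint_flip_apply_of_inner hT, map_smul, inner_smul_left, inner_smul_right, ← mul_assoc,
    RCLike.conj_mul]
  push_cast
  rfl

theorem exists_isDensity_norm_sub_le
    (hT : ∀ (x u : E₁) (y v : E₂), ⟪T x y, T u v⟫ = ⟪x, u⟫ * ⟪y, v⟫) {ρ₁ : E₁ →ₗ[ℂ] E₁}
    (hρ₁ : IsDensity ρ₁) (x x' : E₁) {y y' : E₂} (hy : ‖y‖ = 1) (hy' : ‖y'‖ = 1) :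
    ∃ ρ : E →ₗ[ℂ] E, IsDensity ρ ∧
      ‖⟪x, ρ₁ x⟫ - ⟪x', ρ₁ x'⟫‖ ≤ ‖⟪T x y, ρ (T x y)⟫ - ⟪T x' y', ρ (T x' y')⟫‖ := by
  have hflip : ∀ {z : E₂}, ‖z‖ = 1 → ∀ u v, ⟪T.flip z u, T.flip z v⟫ = ⟪u, v⟫ := fun hz u v => by
    rw [LinearMap.flip_apply, LinearMap.flip_apply, hT, inner_self_eq_norm_sq_to_K, hz]
    simp
  have hself : ∀ {z : E₂}, ‖z‖ = 1 → ‖⟪z, z⟫‖ ^ 2 = 1 := fun hz => by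
    rw [inner_self_eq_norm_sq_to_K, hz]; simp
  set t := ‖⟪y, y'⟫‖ ^ 2
  have ht : t ≤ 1 := pow_le_one₀ (norm_nonneg _)
    ((norm_inner_le_norm y y').trans_eq (by rw [hy, hy', mul_one]))
  have hsymm : ‖⟪y', y⟫‖ ^ 2 = t := by rw [norm_inner_symm]
  rcases abs_sub_le_abs_sub_mul_or (hρ₁.2.1 x) (hρ₁.2.1 x') ht with h | h
  · refine ⟨_, hρ₁.conj_isometry (hflip hy), ?_⟩
    rw [inner_conj_flip_apply_of_inner hT, inner_conj_flip_apply_of_inner hT, hself hy,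
      ← hρ₁.coe_re_inner_apply_self x, ← hρ₁.coe_re_inner_apply_self x']
    simpa only [Complex.ofReal_one, one_mul, ← Complex.ofReal_mul, ← Complex.ofReal_sub,
      Complex.norm_real, Real.norm_eq_abs] using h
  · refine ⟨_, hρ₁.conj_isometry (hflip hy'), ?_⟩
    rw [inner_conj_flip_apply_of_inner hT, inner_conj_flip_apply_of_inner hT, hself hy', hsymm,
      ← hρ₁.coe_re_inner_apply_self x, ← hρ₁.coe_re_inner_apply_self x']
    simpa only [Complex.ofReal_one, one_mul, ← Complex.ofReal_mul, ← Complex.ofReal_sub,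
      Complex.norm_real, Real.norm_eq_abs] using h

end

theorem error_subsystem_general {H₁ H₂ : Type*}
    [NormedAddCommGroup H₁] [InnerProductSpace ℂ H₁] [FiniteDimensional ℂ H₁]
    [NormedAddCommGroup H₂] [InnerProductSpace ℂ H₂]
    {d₁ d₂ : ℕ} (hd : 2 ≤ d₁ * d₂)
    (T : H₁ →ₗ[ℂ] H₂ →ₗ[ℂ] H)
    (hT : ∀ (x u : H₁) (y v : H₂), ⟪T x y, T u v⟫ = ⟪x, u⟫ * ⟪y, v⟫)
    (a1 a'1 : OrthonormalBasis (Fin d₁) ℂ H₁)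
    (a2 a'2 : OrthonormalBasis (Fin d₂) ℂ H₂) :
    siError (⇑a1) (⇑a'1) ≤
      siError (fun p : Fin d₁ × Fin d₂ => T (a1 p.1) (a2 p.2))
              (fun p : Fin d₁ × Fin d₂ => T (a'1 p.1) (a'2 p.2)) := by
  have hunit : ∀ (b : OrthonormalBasis (Fin d₁) ℂ H₁) (c : OrthonormalBasis (Fin d₂) ℂ H₂)
      (p : Fin d₁ × Fin d₂), ‖T (b p.1) (c p.2)‖ = 1 := fun b c p => by
    rw [norm_apply_apply_of_inner hT, b.orthonormal.1, c.orthonormal.1, mul_one]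
  have n : Fin d₂ := ⟨0, Nat.pos_of_ne_zero (by rintro rfl; simp at hd)⟩
  refine Real.iSup_le (fun ρ₁ => ?_) (siError_nonneg _ _)
  rw [sdError_eq_iSup_norm_sub]
  refine Real.iSup_le (fun m => ?_) (siError_nonneg _ _)
  obtain ⟨ρ, hρ, hle⟩ := exists_isDensity_norm_sub_le hT ρ₁.2 (a1 m) (a'1 m)
    (a2.orthonormal.1 n) (a'2.orthonormal.1 n)
  exact hle.trans (norm_sub_inner_le_siError (hunit a1 a2) (hunit a'1 a'2) hρ (m, n))

/-- for product-form measurements on a tensor product `H = H₁ ⊗ H₂`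
(encoded by a bilinear map `T` that multiplies inner products and has spanning range),
the error dominates the error of the first factor. -/
theorem error_subsystem {H₁ H₂ : Type*}
    [NormedAddCommGroup H₁] [InnerProductSpace ℂ H₁] [FiniteDimensional ℂ H₁]
    [NormedAddCommGroup H₂] [InnerProductSpace ℂ H₂] [FiniteDimensional ℂ H₂]
    {d₁ d₂ : ℕ} (hd : 2 ≤ d₁ * d₂)
    (T : H₁ →ₗ[ℂ] H₂ →ₗ[ℂ] H)
    (hT : ∀ (x u : H₁) (y v : H₂), ⟪T x y, T u v⟫ = ⟪x, u⟫ * ⟪y, v⟫)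
    (hspan : Submodule.span ℂ {z : H | ∃ x y, T x y = z} = ⊤)
    (a1 a'1 : OrthonormalBasis (Fin d₁) ℂ H₁)
    (a2 a'2 : OrthonormalBasis (Fin d₂) ℂ H₂) :
    siError (⇑a1) (⇑a'1) ≤
      siError (fun p : Fin d₁ × Fin d₂ => T (a1 p.1) (a2 p.2))
              (fun p : Fin d₁ × Fin d₂ => T (a'1 p.1) (a'2 p.2)) :=
  error_subsystem_general hd T hT a1 a'1 a2 a'2
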